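/- Let G be a non-abelian CSA group and n ≥ 1. For any two systems of equations S₁, S₂ ⊆ G[X] = G ∗ F(x_1, …, x_n) with coefficients in G there exists a system S ⊆ G[X] such that V_G(S) = V_G(S₁) ∪ V_G(S₂); that is, the union of two algebraic sets over G is again an algebraic set, so the closed sets of the Zariski topology on G^n are precisely the algebraic sets. -/

import Mathlib

open Monoid

section EquationsOverGroups

variable {G : Type*} [Group G] {V : Type*}

/-- Substitution of a tuple `a : V → G` for the variables: the homomorphism
`G[X] = G ∗ F(X) →* G` which is the identity on `G` and sends the variable `x` to `a x`. -/
noncomputable def substHom (a : V → G) : Coprod G (FreeGroup V) →* G :=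
  Coprod.lift (MonoidHom.id G) (FreeGroup.lift a)

/-- The algebraic set `V_G(S)` defined by a system of equations `S ⊆ G[X]`. -/
noncomputable def algSet (S : Set (Coprod G (FreeGroup V))) : Set (V → G) :=
  {a | ∀ w ∈ S, substHom a w = 1}

end EquationsOverGroups

/-- The conjugate `H^g = g⁻¹ H g` of a subgroup `H` by an element `g`. -/
def Subgroup.conjBy {G : Type*} [Group G] (H : Subgroup G) (g : G) : Subgroup G :=
  H.map (MulAut.conj g⁻¹).toMonoidHom

/-- A subgroup `M` of `G` is a maximal abelian subgroup if it is abelian and maximal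
among abelian subgroups of `G`. -/
def IsMaximalAbelian {G : Type*} [Group G] (M : Subgroup G) : Prop :=
  (∀ x ∈ M, ∀ y ∈ M, x * y = y * x) ∧
    ∀ N : Subgroup G, (∀ x ∈ N, ∀ y ∈ N, x * y = y * x) → M ≤ N → N = M

/-- A group is a CSA group if every maximal abelian subgroup is malnormal. -/
def IsCSA (G : Type*) [Group G] : Prop :=
  ∀ M : Subgroup G, IsMaximalAbelian M → ∀ g : G, g ∉ M → (M.conjBy g) ⊓ M = ⊥

/-- Every element lies in a maximal abelian subgroup (Zorn). -/
lemma exists_isMaximalAbelian_mem {G : Type*} [Group G] (x : G) :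
    ∃ M : Subgroup G, IsMaximalAbelian M ∧ x ∈ M := by
  set s : Set (Subgroup G) :=
    {N | (∀ a ∈ N, ∀ b ∈ N, a * b = b * a) ∧ x ∈ N} with hs
  have ih : ∀ c ⊆ s, IsChain (· ≤ ·) c → ∀ y ∈ c, ∃ ub ∈ s, ∀ z ∈ c, z ≤ ub := by
    intro c hcs hc y hy
    refine ⟨sSup c, ⟨?_, ?_⟩, fun z hz => le_sSup hz⟩
    · intro a ha b hb
      rw [Subgroup.mem_sSup_of_directedOn ⟨y, hy⟩ hc.directedOn] at ha hb
      obtain ⟨A, hA, ha⟩ := ha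
      obtain ⟨B, hB, hb⟩ := hb
      obtain ⟨C, hC, hAC, hBC⟩ := hc.directedOn A hA B hB
      exact (hcs hC).1 a (hAC ha) b (hBC hb)
    · exact le_sSup hy (hcs hy).2
  obtain ⟨M, hxM, hMs, hMmax⟩ :=
    zorn_le_nonempty₀ s ih (Subgroup.zpowers x) ⟨fun a ha b hb => by
      obtain ⟨m, rfl⟩ := ha; obtain ⟨k, rfl⟩ := hb
      exact ((Commute.refl x).zpow_zpow m k), Subgroup.mem_zpowers x⟩
  refine ⟨M, ⟨hMs.1, fun N hN hle => ?_⟩, hMs.2⟩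
  exact le_antisymm (hMmax ⟨hN, hle hMs.2⟩ hle) hle

/-- In a CSA group, the centralizer of a nontrivial element of a maximal
abelian subgroup is contained in that subgroup. -/
lemma mem_of_commute_of_CSA {G : Type*} [Group G] (hCSA : IsCSA G)
    {M : Subgroup G} (hM : IsMaximalAbelian M) {a : G} (ha : a ∈ M) (ha1 : a ≠ 1)
    {b : G} (hab : a * b = b * a) : b ∈ M := by
  by_contra hb
  have h := hCSA M hM b hb
  have haconj : a ∈ M.conjBy b := by
    refine ⟨a, ha, ?_⟩
    show b⁻¹ * a * b⁻¹⁻¹ = a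
    rw [inv_inv, mul_assoc, hab, ← mul_assoc, inv_mul_cancel, one_mul]
  have : a ∈ (M.conjBy b) ⊓ M := ⟨haconj, ha⟩
  rw [h] at this
  exact ha1 this

/-- Key lemma: in a non-abelian CSA group, if all conjugates of `u` commute
with `v`, then `u = 1` or `v = 1`. -/
lemma key_CSA {G : Type*} [Group G] (hna : ∃ x y : G, x * y ≠ y * x)
    (hCSA : IsCSA G) {u v : G}
    (h : ∀ g : G, (g⁻¹ * u * g) * v = v * (g⁻¹ * u * g)) : u = 1 ∨ v = 1 := by
  by_contra hc
  push_neg at hc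
  obtain ⟨hu, hv⟩ := hc
  -- centralizer of v is abelian: all g⁻¹ug lie in a maximal abelian subgroup with v
  obtain ⟨Mv, hMv, hvMv⟩ := exists_isMaximalAbelian_mem v
  have hconj_mem : ∀ g : G, g⁻¹ * u * g ∈ Mv := fun g =>
    mem_of_commute_of_CSA hCSA hMv hvMv hv ((h g).symm)
  -- so u commutes with all its conjugates
  have hcomm : ∀ g : G, u * (g⁻¹ * u * g) = (g⁻¹ * u * g) * u := by
    intro g
    have h1 := hconj_mem 1
    simp only [inv_one, one_mul, mul_one] at h1
    exact hMv.1 u h1 _ (hconj_mem g)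
  -- maximal abelian M containing u
  obtain ⟨M, hM, huM⟩ := exists_isMaximalAbelian_mem u
  have hall : ∀ g : G, g ∈ M := by
    intro g
    by_contra hg
    have hbot := hCSA M hM g hg
    have hug : g⁻¹ * u * g ∈ M :=
      mem_of_commute_of_CSA hCSA hM huM hu (hcomm g)
    have hug' : g⁻¹ * u * g ∈ M.conjBy g := by
      refine ⟨u, huM, ?_⟩
      show g⁻¹ * u * g⁻¹⁻¹ = g⁻¹ * u * g
      rw [inv_inv]
    have : g⁻¹ * u * g ∈ (M.conjBy g) ⊓ M := ⟨hug', hug⟩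
    rw [hbot] at this
    have : u = 1 := by
      have hh : g⁻¹ * u * g = 1 := this
      have := congrArg (fun x => g * x * g⁻¹) hh
      simpa [mul_assoc] using this
    exact hu this
  obtain ⟨x, y, hxy⟩ := hna
  exact hxy (hM.1 x (hall x) y (hall y))

open scoped commutatorElement

/-- Over a non-abelian CSA group `G`, the union of two algebraic sets in `Gⁿ` is again
an algebraic set; hence the closed sets of the Zariski topology on `Gⁿ` are precisely
the algebraic sets. -/
theorem union_of_algebraic_sets_is_algebraic_of_CSA
    (G : Type*) [Group G] (hna : ∃ x y : G, x * y ≠ y * x) (hCSA : IsCSA G)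
    (n : ℕ) (hn : 1 ≤ n)
    (S₁ S₂ : Set (Coprod G (FreeGroup (Fin n)))) :
    ∃ S : Set (Coprod G (FreeGroup (Fin n))),
      algSet S = algSet S₁ ∪ algSet S₂ := by
  classical
  refine ⟨{w | ∃ g : G, ∃ s₁ ∈ S₁, ∃ s₂ ∈ S₂,
      w = ⁅(Coprod.inl g)⁻¹ * s₁ * Coprod.inl g, s₂⁆}, ?_⟩
  ext a
  have hsub : ∀ (g : G) (s₁ s₂ : Coprod G (FreeGroup (Fin n))),
      substHom a ⁅(Coprod.inl g)⁻¹ * s₁ * Coprod.inl g, s₂⁆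
        = ⁅g⁻¹ * substHom a s₁ * g, substHom a s₂⁆ := by
    intro g s₁ s₂
    have hg : substHom a (Coprod.inl g) = g := by
      simp [substHom, Coprod.lift_apply_inl]
    simp [commutatorElement_def, map_mul, map_inv, hg]
  constructor
  · intro ha
    by_contra hun
    simp only [Set.mem_union, not_or] at hun
    obtain ⟨h1, h2⟩ := hun
    simp only [algSet, Set.mem_setOf_eq, not_forall] at h1 h2
    obtain ⟨s₁, hs₁, hu⟩ := h1
    obtain ⟨s₂, hs₂, hv⟩ := h2
    have hcomm : ∀ g : G,
        (g⁻¹ * substHom a s₁ * g) * substHom a s₂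
          = substHom a s₂ * (g⁻¹ * substHom a s₁ * g) := by
      intro g
      have := ha _ ⟨g, s₁, hs₁, s₂, hs₂, rfl⟩
      rw [hsub] at this
      exact commutatorElement_eq_one_iff_mul_comm.mp this
    rcases key_CSA hna hCSA hcomm with h | h
    · exact hu h
    · exact hv h
  · rintro (ha | ha) <;>
    · rintro w ⟨g, s₁, hs₁, s₂, hs₂, rfl⟩
      rw [hsub]
      rw [commutatorElement_eq_one_iff_mul_comm]
      first
      | (rw [ha s₁ hs₁]; group)
      | (rw [ha s₂ hs₂]; group)
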